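/- Fix integers R ≥ 1 and κ ≥ 2, and let a be the amplitude function of a unit vector ψ in ℂ^R ⊗ (ℂ^κ ⊗ ℂ^R) ⊗ ℂ^κ as in the tripartite setup. Suppose the MatchCheck success probability of ψ satisfies Σ_{v,c} |a_{vc,vc}|² ≥ 1 − ε, and suppose the reduced density matrix ρ_{BC} is separable (as a state on ℂ^{κR} ⊗ ℂ^κ). Then there exists a function σ : [R] → [κ] such that Σ_{v∈[R]} |a_{v σ(v), v σ(v)}|² ≥ 1 − (κ + 1)ε. -/

import Mathlib

open scoped BigOperators ComplexOrder Kronecker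
open Matrix

/-- A density matrix on `ℂ^M ⊗ ℂ^N` is separable if it is a finite convex combination of
Kronecker products of density matrices. -/
def MatIsSeparable {m n : Type*} [Fintype m] [Fintype n]
    (ρ : Matrix (m × n) (m × n) ℂ) : Prop :=
  ∃ (k : ℕ) (p : Fin k → ℝ) (M : Fin k → Matrix m m ℂ) (N : Fin k → Matrix n n ℂ),
    (∀ i, 0 ≤ p i) ∧ (∑ i, p i = 1) ∧
    (∀ i, (M i).PosSemidef ∧ (M i).trace = 1) ∧
    (∀ i, (N i).PosSemidef ∧ (N i).trace = 1) ∧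
    ρ = ∑ i, (p i : ℂ) • (M i ⊗ₖ N i)

/-- The reduced density matrix on registers `B = ℂ^κ ⊗ ℂ^R` and `C = ℂ^κ`, obtained by
tracing out register `A` from the tripartite pure state with amplitudes `a`:
`⟨c,v,d| ρ_BC |e,w,f⟩ = Σ_x a_{xc,vd} · conj(a_{xe,wf})`. -/
noncomputable def rhoBC {R κ : ℕ} (a : (Fin R × Fin κ) × (Fin R × Fin κ) → ℂ) :
    Matrix ((Fin κ × Fin R) × Fin κ) ((Fin κ × Fin R) × Fin κ) ℂ :=
  Matrix.of fun p q =>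
    ∑ x : Fin R, a ((x, p.1.1), (p.1.2, p.2)) * (starRingEnd ℂ) (a ((x, q.1.1), (q.1.2, q.2)))

/-!
Take `σ v` maximizing `‖a ((v, c), (v, c))‖` over `c`. For `c ≠ σ v` the entry
`⟨c,v,c| ρ_BC |σ v,v,σ v⟩ = ∑ x, a_{xc,vc} · conj a_{x(σ v),v(σ v)}` has its `x = v` term of size at
least `‖a_{vc,vc}‖²`. A separable state has positive partial transpose, and a `2 × 2` minor of
the partial transpose bounds this entry by the mean of the diagonal entries
`∑ x, ‖a_{xc,v(σ v)}‖²` and `∑ x, ‖a_{x(σ v),vc}‖²`, which consist of off-diagonal amplitudes,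
as do the terms `x ≠ v`. Summing over `v` and `c ≠ σ v`, the matched mass missed by `σ` is at most
`(κ + 2) / 2 ≤ κ` times the off-diagonal mass, which is at most `ε`.
-/

namespace Matrix

lemma PosSemidef.norm_sq_apply_le {n : Type*} {M : Matrix n n ℂ} (hM : M.PosSemidef)
    (i j : n) : ‖M i j‖ ^ 2 ≤ (M i i).re * (M j j).re := by
  classical
  have hdet := (hM.submatrix ![i, j]).det_nonneg
  rw [det_fin_two, Complex.nonneg_iff] at hdet
  have hji : M j i = star (M i j) := (congrFun (congrFun hM.isHermitian j) i).symm
  have hii := Complex.nonneg_iff.1 (hM.diag_nonneg (i := i))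
  have hjj := Complex.nonneg_iff.1 (hM.diag_nonneg (i := j))
  simp only [submatrix_apply, cons_val_zero, cons_val_one, hji, Complex.sub_re,
    Complex.mul_re, Complex.star_def, Complex.conj_re, Complex.conj_im] at hdet
  rw [Complex.sq_norm, Complex.normSq_apply]
  nlinarith [hdet.1, hii.2, hjj.2]

lemma PosSemidef.norm_apply_le {n : Type*} {M : Matrix n n ℂ} (hM : M.PosSemidef)
    (i j : n) : ‖M i j‖ ≤ ((M i i).re + (M j j).re) / 2 := by
  have hsq := hM.norm_sq_apply_le i j
  have hii := (Complex.nonneg_iff.1 (hM.diag_nonneg (i := i))).1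
  have hjj := (Complex.nonneg_iff.1 (hM.diag_nonneg (i := j))).1
  nlinarith [norm_nonneg (M i j), sq_nonneg ((M i i).re - (M j j).re)]

variable {m n : Type*}

def partialTranspose {α : Type*} (ρ : Matrix (m × n) (m × n) α) : Matrix (m × n) (m × n) α :=
  of fun p q => ρ (p.1, q.2) (q.1, p.2)

lemma partialTranspose_sum_smul_kronecker [Fintype m] [Fintype n] {α ι : Type*}
    [CommSemiring α] [Fintype ι] (p : ι → α) (M : ι → Matrix m m α) (N : ι → Matrix n n α) :
    partialTranspose (∑ i, p i • (M i ⊗ₖ N i)) = ∑ i, p i • (M i ⊗ₖ (N i)ᵀ) := by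
  ext x y
  simp [partialTranspose, sum_apply, kroneckerMap_apply]

end Matrix

open Matrix

/-- The Peres–Horodecki criterion. -/
lemma MatIsSeparable.posSemidef_partialTranspose {m n : Type*} [Fintype m] [Fintype n]
    {ρ : Matrix (m × n) (m × n) ℂ} (hρ : MatIsSeparable ρ) : (partialTranspose ρ).PosSemidef := by
  obtain ⟨k, p, M, N, hp, -, hM, hN, rfl⟩ := hρ
  rw [partialTranspose_sum_smul_kronecker]
  refine posSemidef_sum _ fun i _ => ?_
  exact ((hM i).1.kronecker (hN i).1.transpose).smul (by exact_mod_cast hp i)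

lemma MatIsSeparable.norm_apply_le {m n : Type*} [Fintype m] [Fintype n]
    {ρ : Matrix (m × n) (m × n) ℂ} (hρ : MatIsSeparable ρ) (b b' : m) (c c' : n) :
    ‖ρ (b, c) (b', c')‖ ≤ ((ρ (b, c') (b, c')).re + (ρ (b', c) (b', c)).re) / 2 :=
  hρ.posSemidef_partialTranspose.norm_apply_le (b, c') (b', c)

open Finset

section OffDiagonal

variable {α : Type*} [DecidableEq α]

def offDiagPart (w : α × α → ℝ) (p : α × α) : ℝ := if p.1 = p.2 then 0 else w p

variable {w : α × α → ℝ}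

lemma offDiagPart_nonneg (hw : ∀ p, 0 ≤ w p) (p : α × α) : 0 ≤ offDiagPart w p :=
  ite_nonneg le_rfl (hw p)

lemma offDiagPart_of_ne {p : α × α} (h : p.1 ≠ p.2) : offDiagPart w p = w p := if_neg h

variable [Fintype α]

lemma sum_offDiagPart : ∑ p, offDiagPart w p = ∑ p, w p - ∑ i, w (i, i) := by
  have hsplit : ∀ p : α × α, w p = (if p.1 = p.2 then w p else 0) + offDiagPart w p := by
    intro p
    unfold offDiagPart
    split_ifs <;> simp
  simp_rw [Fintype.sum_congr _ _ hsplit, sum_add_distrib, Fintype.sum_prod_type, sum_ite_eq,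
    mem_univ, if_true]
  ring

lemma sum_offDiagPart_comp_le (hw : ∀ p, 0 ≤ w p) {T : Type*} [Fintype T] {φ : T → α × α}
    (hφ : φ.Injective) : ∑ t, offDiagPart w (φ t) ≤ ∑ p, offDiagPart w p := by
  calc ∑ t, offDiagPart w (φ t) = ∑ p ∈ univ.map ⟨φ, hφ⟩, offDiagPart w p := by
        rw [sum_map]; rfl
    _ ≤ ∑ p, offDiagPart w p := sum_le_univ_sum_of_nonneg (offDiagPart_nonneg hw)

end OffDiagonal

section DiagonalLoss

variable {ι K : Type*} [Fintype ι] [Fintype K] [DecidableEq ι] [DecidableEq K]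
  {w : (ι × K) × (ι × K) → ℝ}

lemma sum_sum_sum_le_sum_offDiagPart (hw : ∀ p, 0 ≤ w p)
    {φ : ι × K × ι → (ι × K) × (ι × K)} (hφ : φ.Injective) (s : ι → Finset K) (t : ι → Finset ι)
    (hoff : ∀ v, ∀ c ∈ s v, ∀ x ∈ t v, (φ (v, c, x)).1 ≠ (φ (v, c, x)).2) :
    ∑ v, ∑ c ∈ s v, ∑ x ∈ t v, w (φ (v, c, x)) ≤ ∑ p, offDiagPart w p := by
  have hnn := offDiagPart_nonneg hw
  calc ∑ v, ∑ c ∈ s v, ∑ x ∈ t v, w (φ (v, c, x))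
      = ∑ v, ∑ c ∈ s v, ∑ x ∈ t v, offDiagPart w (φ (v, c, x)) :=
        sum_congr rfl fun v _ => sum_congr rfl fun c hc => sum_congr rfl fun x hx =>
          (offDiagPart_of_ne (hoff v c hc x hx)).symm
    _ ≤ ∑ v, ∑ c, ∑ x, offDiagPart w (φ (v, c, x)) :=
        sum_le_sum fun v _ =>
          (sum_le_sum fun c _ => sum_le_univ_sum_of_nonneg fun x => hnn _).trans
            (sum_le_univ_sum_of_nonneg fun c => sum_nonneg fun x _ => hnn _)
    _ = ∑ t, offDiagPart w (φ t) := by simp only [Fintype.sum_prod_type]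
    _ ≤ ∑ p, offDiagPart w p := sum_offDiagPart_comp_le hw hφ

lemma two_mul_sum_sum_erase_le_sum_offDiagPart [Nonempty K] (hw : ∀ p, 0 ≤ w p) (σ : ι → K)
    (hkey : ∀ v, ∀ c ≠ σ v, 2 * w ((v, c), (v, c)) ≤
      ∑ x, w ((x, c), (v, σ v)) + ∑ x, w ((x, σ v), (v, c)) +
        ∑ x ∈ univ.erase v, w ((x, c), (v, c)) + ∑ x ∈ univ.erase v, w ((x, σ v), (v, σ v))) :
    2 * ∑ v, ∑ c ∈ univ.erase (σ v), w ((v, c), (v, c)) ≤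
      (Fintype.card K + 2) * ∑ p, offDiagPart w p := by
  set O := ∑ p, offDiagPart w p
  have hO : 0 ≤ O := sum_nonneg fun p _ => offDiagPart_nonneg hw p
  have hcol : ∑ v, ∑ c ∈ univ.erase (σ v), ∑ x, w ((x, c), (v, σ v)) ≤ O :=
    sum_sum_sum_le_sum_offDiagPart hw (φ := fun t => ((t.2.2, t.2.1), (t.1, σ t.1)))
      (fun t t' h => by simp_all [Prod.ext_iff]) _ _
      fun v c hc x _ h => ne_of_mem_erase hc (congrArg Prod.snd h)
  have hrow : ∑ v, ∑ c ∈ univ.erase (σ v), ∑ x, w ((x, σ v), (v, c)) ≤ O :=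
    sum_sum_sum_le_sum_offDiagPart hw (φ := fun t => ((t.2.2, σ t.1), (t.1, t.2.1)))
      (fun t t' h => by simp_all [Prod.ext_iff]) _ _
      fun v c hc x _ h => ne_of_mem_erase hc (congrArg Prod.snd h).symm
  have hdiag (s : ι → Finset K) :
      ∑ v, ∑ c ∈ s v, ∑ x ∈ univ.erase v, w ((x, c), (v, c)) ≤ O :=
    sum_sum_sum_le_sum_offDiagPart hw (φ := fun t => ((t.2.2, t.2.1), (t.1, t.2.1)))
      (fun t t' h => by simp_all [Prod.ext_iff]) _ _
      fun v c _ x hx h => ne_of_mem_erase hx (congrArg Prod.fst h)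
  have hpivot : ∑ v, ∑ x ∈ univ.erase v, w ((x, σ v), (v, σ v)) ≤ O := by
    simpa using hdiag fun v => {σ v}
  have hcard : ∀ v, ((univ.erase (σ v)).card : ℝ) = Fintype.card K - 1 := fun v => by
    rw [card_erase_of_mem (mem_univ _), card_univ, Nat.cast_pred Fintype.card_pos]
  calc 2 * ∑ v, ∑ c ∈ univ.erase (σ v), w ((v, c), (v, c))
      = ∑ v, ∑ c ∈ univ.erase (σ v), 2 * w ((v, c), (v, c)) := by simp only [mul_sum]
    _ ≤ ∑ v, ∑ c ∈ univ.erase (σ v), (∑ x, w ((x, c), (v, σ v)) + ∑ x, w ((x, σ v), (v, c)) +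
        ∑ x ∈ univ.erase v, w ((x, c), (v, c)) +
          ∑ x ∈ univ.erase v, w ((x, σ v), (v, σ v))) :=
        sum_le_sum fun v _ => sum_le_sum fun c hc => hkey v c (ne_of_mem_erase hc)
    _ = ∑ v, ∑ c ∈ univ.erase (σ v), ∑ x, w ((x, c), (v, σ v)) +
          ∑ v, ∑ c ∈ univ.erase (σ v), ∑ x, w ((x, σ v), (v, c)) +
          ∑ v, ∑ c ∈ univ.erase (σ v), ∑ x ∈ univ.erase v, w ((x, c), (v, c)) +
          (Fintype.card K - 1) * ∑ v, ∑ x ∈ univ.erase v, w ((x, σ v), (v, σ v)) := by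
        simp only [sum_add_distrib, sum_const, nsmul_eq_mul, hcard, mul_sum]
    _ ≤ O + O + O + (Fintype.card K - 1) * O := by
        have : (1 : ℝ) ≤ Fintype.card K := by exact_mod_cast Fintype.card_pos
        gcongr
        · exact hdiag _
    _ = (Fintype.card K + 2) * O := by ring

end DiagonalLoss

section rhoBC

variable {R κ : ℕ} (a : (Fin R × Fin κ) × (Fin R × Fin κ) → ℂ)

lemma rhoBC_apply_self_re (c : Fin κ) (v : Fin R) (d : Fin κ) :
    (rhoBC a ((c, v), d) ((c, v), d)).re = ∑ x, ‖a ((x, c), (v, d))‖ ^ 2 := by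
  simp only [rhoBC, of_apply, Complex.re_sum, Complex.mul_conj, Complex.normSq_eq_norm_sq,
    Complex.ofReal_re]

lemma norm_mul_norm_le_norm_rhoBC_add (v : Fin R) (c c' : Fin κ) :
    ‖a ((v, c), (v, c))‖ * ‖a ((v, c'), (v, c'))‖ ≤
      ‖rhoBC a ((c, v), c) ((c', v), c')‖ +
        ∑ x ∈ univ.erase v, ‖a ((x, c), (v, c))‖ * ‖a ((x, c'), (v, c'))‖ := by
  set f : Fin R → ℂ := fun x => a ((x, c), (v, c)) * starRingEnd ℂ (a ((x, c'), (v, c')))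
  have hρ : rhoBC a ((c, v), c) ((c', v), c') = f v + ∑ x ∈ univ.erase v, f x :=
    (add_sum_erase _ f (mem_univ v)).symm
  calc ‖a ((v, c), (v, c))‖ * ‖a ((v, c'), (v, c'))‖
      = ‖rhoBC a ((c, v), c) ((c', v), c') - ∑ x ∈ univ.erase v, f x‖ := by
        simp [hρ, f]
    _ ≤ ‖rhoBC a ((c, v), c) ((c', v), c')‖ + ∑ x ∈ univ.erase v, ‖f x‖ :=
        (norm_sub_le _ _).trans (by gcongr; exact norm_sum_le _ _)
    _ = _ := by simp [f]

lemma two_mul_norm_sq_le_of_separable (hsep : MatIsSeparable (rhoBC a)) {v : Fin R}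
    {c c' : Fin κ} (hle : ‖a ((v, c), (v, c))‖ ≤ ‖a ((v, c'), (v, c'))‖) :
    2 * ‖a ((v, c), (v, c))‖ ^ 2 ≤
      ∑ x, ‖a ((x, c), (v, c'))‖ ^ 2 + ∑ x, ‖a ((x, c'), (v, c))‖ ^ 2 +
        ∑ x ∈ univ.erase v, ‖a ((x, c), (v, c))‖ ^ 2 +
          ∑ x ∈ univ.erase v, ‖a ((x, c'), (v, c'))‖ ^ 2 := by
  have hρ := hsep.norm_apply_le (c, v) (c', v) c c'
  rw [rhoBC_apply_self_re, rhoBC_apply_self_re] at hρ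
  have hamgm : 2 * ∑ x ∈ univ.erase v, ‖a ((x, c), (v, c))‖ * ‖a ((x, c'), (v, c'))‖ ≤
      ∑ x ∈ univ.erase v, ‖a ((x, c), (v, c))‖ ^ 2 +
        ∑ x ∈ univ.erase v, ‖a ((x, c'), (v, c'))‖ ^ 2 := by
    rw [mul_sum, ← sum_add_distrib]
    gcongr with x
    rw [← mul_assoc]
    exact two_mul_le_add_sq _ _
  nlinarith [norm_mul_norm_le_norm_rhoBC_add a v c c',
    mul_le_mul_of_nonneg_left hle (norm_nonneg (a ((v, c), (v, c))))]

end rhoBC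

theorem matchcheck_separable_close_to_quasirigid_general
    (R κ : ℕ) (hκ : 2 ≤ κ)
    (a : (Fin R × Fin κ) × (Fin R × Fin κ) → ℂ)
    (hnorm : ∑ p : (Fin R × Fin κ) × (Fin R × Fin κ), ‖a p‖ ^ 2 = 1)
    (ε : ℝ)
    (hmatch : 1 - ε ≤ ∑ v : Fin R, ∑ c : Fin κ, ‖a ((v, c), (v, c))‖ ^ 2)
    (hsep : MatIsSeparable (rhoBC a)) :
    ∃ σ : Fin R → Fin κ,
      1 - (κ + 1) * ε ≤ ∑ v : Fin R, ‖a ((v, σ v), (v, σ v))‖ ^ 2 := by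
  have : Nonempty (Fin κ) := ⟨⟨0, by omega⟩⟩
  choose σ hσ using fun v : Fin R => Finite.exists_max fun c => ‖a ((v, c), (v, c))‖
  refine ⟨σ, ?_⟩
  have hw (p : (Fin R × Fin κ) × (Fin R × Fin κ)) : 0 ≤ ‖a p‖ ^ 2 := sq_nonneg _
  have hloss := two_mul_sum_sum_erase_le_sum_offDiagPart hw σ
    fun v c _ => two_mul_norm_sq_le_of_separable a hsep (hσ v c)
  have hoff : ∑ p, offDiagPart (fun p => ‖a p‖ ^ 2) p =
      1 - ∑ v, ∑ c, ‖a ((v, c), (v, c))‖ ^ 2 := by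
    rw [sum_offDiagPart, hnorm, Fintype.sum_prod_type fun i => ‖a (i, i)‖ ^ 2]
  have hO := hoff ▸ sum_nonneg fun p _ => offDiagPart_nonneg hw p
  have hsplit : ∑ v, ∑ c, ‖a ((v, c), (v, c))‖ ^ 2 = ∑ v, ‖a ((v, σ v), (v, σ v))‖ ^ 2 +
      ∑ v, ∑ c ∈ univ.erase (σ v), ‖a ((v, c), (v, c))‖ ^ 2 := by
    rw [← sum_add_distrib]
    exact sum_congr rfl fun v _ => (add_sum_erase _ _ (mem_univ _)).symm
  rw [hoff, Fintype.card_fin] at hloss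
  rw [hsplit] at hmatch hloss hO
  have hκ' : (2 : ℝ) ≤ κ := by exact_mod_cast hκ
  nlinarith

/-- if `MatchCheck` succeeds with probability at least `1 − ε` and `ρ_BC` is
separable, then the state is `(κ+1)ε`-close to quasirigid: there is an assignment
`σ : [R] → [κ]` capturing almost all of the matched weight. -/
theorem matchcheck_separable_close_to_quasirigid
    (R κ : ℕ) (hR : 1 ≤ R) (hκ : 2 ≤ κ)
    (a : (Fin R × Fin κ) × (Fin R × Fin κ) → ℂ)
    (hnorm : ∑ p : (Fin R × Fin κ) × (Fin R × Fin κ), ‖a p‖ ^ 2 = 1)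
    (ε : ℝ)
    (hmatch : 1 - ε ≤ ∑ v : Fin R, ∑ c : Fin κ, ‖a ((v, c), (v, c))‖ ^ 2)
    (hsep : MatIsSeparable (rhoBC a)) :
    ∃ σ : Fin R → Fin κ,
      1 - (κ + 1) * ε ≤ ∑ v : Fin R, ‖a ((v, σ v), (v, σ v))‖ ^ 2 :=
  matchcheck_separable_close_to_quasirigid_general R κ hκ a hnorm ε hmatch hsep
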